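/- arXiv:1602.05242 — 4 statements merged into one kernel-verified Lean document; each statement's English description precedes it below -/
import Mathlib

section
/- Let μ : 2^[n] → ℝ≥0 be a k-homogeneous probability distribution that is negatively associated, and suppose 0 < P_{R∼μ}[n ∈ R] < 1. Let Ω₀ = {S ∈ supp(μ) : n ∉ S} and Ω₁ = {S ∈ supp(μ) : n ∈ S}. For A ⊆ Ω₁ let N(A) = {T ∈ Ω₀ : ∃ S ∈ A, T ⊇ S \ {n}}. Then μ(N(A))/μ(Ω₀) ≥ μ(A)/μ(Ω₁). -/
open Finset

def IsIndicator {n : ℕ} (f : Finset (Fin n) → ℝ) : Prop :=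
  ∀ S, f S = 0 ∨ f S = 1

def IsIncreasingFn {n : ℕ} (f : Finset (Fin n) → ℝ) : Prop :=
  ∀ S T, S ⊆ T → f S ≤ f T

def DependsOnCoords {n : ℕ} (f : Finset (Fin n) → ℝ) (D : Finset (Fin n)) : Prop :=
  ∀ S T, S ∩ D = T ∩ D → f S = f T

def NegAssoc {n : ℕ} (μ : Finset (Fin n) → ℝ) : Prop :=
  ∀ (f g : Finset (Fin n) → ℝ) (Df Dg : Finset (Fin n)),
    IsIndicator f → IsIndicator g → IsIncreasingFn f → IsIncreasingFn g →
    DependsOnCoords f Df → DependsOnCoords g Dg → Disjoint Df Dg →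
    (∑ S : Finset (Fin n), μ S * f S) * (∑ S : Finset (Fin n), μ S * g S) ≥
      ∑ S : Finset (Fin n), μ S * (f S * g S)

/-- Hall-type expansion lemma (Lemma: `μ(N(A))/μ(Ω₀) ≥ μ(A)/μ(Ω₁)`). -/
theorem expansion_of_negAssoc {n k : ℕ} (μ : Finset (Fin n) → ℝ)
    (hnn : ∀ S, 0 ≤ μ S) (hsum : ∑ S : Finset (Fin n), μ S = 1)
    (hhom : ∀ S, 0 < μ S → S.card = k) (hNA : NegAssoc μ)
    (a : Fin n)
    (Ω₀ Ω₁ : Finset (Finset (Fin n)))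
    (hΩ₀ : ∀ S, S ∈ Ω₀ ↔ 0 < μ S ∧ a ∉ S)
    (hΩ₁ : ∀ S, S ∈ Ω₁ ↔ 0 < μ S ∧ a ∈ S)
    (hmarg : 0 < ∑ S ∈ Ω₁, μ S) (hmarg' : 0 < ∑ S ∈ Ω₀, μ S)
    (A NA : Finset (Finset (Fin n))) (hA : A ⊆ Ω₁)
    (hNA' : ∀ T, T ∈ NA ↔ T ∈ Ω₀ ∧ ∃ S ∈ A, S \ {a} ⊆ T) :
    (∑ T ∈ NA, μ T) / (∑ S ∈ Ω₀, μ S) ≥ (∑ S ∈ A, μ S) / (∑ S ∈ Ω₁, μ S) := by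
  classical
  set f : Finset (Fin n) → ℝ := fun R => if ∃ S ∈ A, S \ {a} ⊆ R then 1 else 0 with hf
  set g : Finset (Fin n) → ℝ := fun R => if a ∈ R then 1 else 0 with hg
  have hfind : IsIndicator f := by
    intro S; simp only [hf]; split <;> simp
  have hgind : IsIndicator g := by
    intro S; simp only [hg]; split <;> simp
  have hfmono : IsIncreasingFn f := by
    intro S T hST
    simp only [hf]
    split
    · rename_i h
      obtain ⟨W, hW, hWS⟩ := h
      rw [if_pos ⟨W, hW, hWS.trans hST⟩]
    · split <;> norm_num
  have hgmono : IsIncreasingFn g := by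
    intro S T hST
    simp only [hg]
    split
    · rename_i h
      rw [if_pos (hST h)]
    · split <;> norm_num
  have hfd : DependsOnCoords f (Finset.univ \ {a}) := by
    intro S T h
    have key : ∀ x : Fin n, x ≠ a → (x ∈ S ↔ x ∈ T) := by
      intro x hx
      have hxD : x ∈ Finset.univ \ {a} := by simp [hx]
      constructor
      · intro hxS
        have : x ∈ S ∩ (Finset.univ \ {a}) := Finset.mem_inter.mpr ⟨hxS, hxD⟩
        rw [h] at this
        exact (Finset.mem_inter.mp this).1
      · intro hxT
        have : x ∈ T ∩ (Finset.univ \ {a}) := Finset.mem_inter.mpr ⟨hxT, hxD⟩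
        rw [← h] at this
        exact (Finset.mem_inter.mp this).1
    simp only [hf]
    have : (∃ W ∈ A, W \ {a} ⊆ S) ↔ ∃ W ∈ A, W \ {a} ⊆ T := by
      constructor
      · rintro ⟨W, hW, hsub⟩
        refine ⟨W, hW, fun x hx => ?_⟩
        have hxa : x ≠ a := by simpa using (Finset.mem_sdiff.mp hx).2
        exact (key x hxa).mp (hsub hx)
      · rintro ⟨W, hW, hsub⟩
        refine ⟨W, hW, fun x hx => ?_⟩
        have hxa : x ≠ a := by simpa using (Finset.mem_sdiff.mp hx).2
        exact (key x hxa).mpr (hsub hx)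
    simp only [this]
  have hgd : DependsOnCoords g {a} := by
    intro S T h
    simp only [hg]
    have : a ∈ S ↔ a ∈ T := by
      constructor
      · intro hs
        have : a ∈ S ∩ {a} := by simp [hs]
        rw [h] at this
        exact (Finset.mem_inter.mp this).1
      · intro ht
        have : a ∈ T ∩ {a} := by simp [ht]
        rw [← h] at this
        exact (Finset.mem_inter.mp this).1
    simp [this]
  have hdisj : Disjoint (Finset.univ \ {a}) ({a} : Finset (Fin n)) := sdiff_disjoint
  have hkey := hNA f g (Finset.univ \ {a}) {a} hfind hgind hfmono hgmono hfd hgd hdisj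
  have hzero : ∀ S : Finset (Fin n), ¬ 0 < μ S → μ S = 0 := fun S h =>
    le_antisymm (not_lt.mp h) (hnn S)
  -- E[g] = μ(Ω₁)
  have hEg : (∑ S : Finset (Fin n), μ S * g S) = ∑ S ∈ Ω₁, μ S := by
    rw [← Finset.sum_subset (Finset.subset_univ Ω₁)]
    · apply Finset.sum_congr rfl
      intro S hS
      have := (hΩ₁ S).mp hS
      simp [hg, this.2]
    · intro S _ hS
      by_cases hm : 0 < μ S
      · have : a ∉ S := fun ha => hS ((hΩ₁ S).mpr ⟨hm, ha⟩)
        simp [hg, this]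
      · simp [hzero S hm]
  -- E[fg] ≥ μ(A)
  have hEfg : (∑ S ∈ A, μ S) ≤ ∑ S : Finset (Fin n), μ S * (f S * g S) := by
    have h1 : (∑ S ∈ A, μ S) = ∑ S ∈ A, μ S * (f S * g S) := by
      apply Finset.sum_congr rfl
      intro S hS
      have haS : a ∈ S := ((hΩ₁ S).mp (hA hS)).2
      have hfS : f S = 1 := by
        simp only [hf]
        rw [if_pos ⟨S, hS, Finset.sdiff_subset⟩]
      simp [hfS, hg, haS]
    rw [h1]
    apply Finset.sum_le_sum_of_subset_of_nonneg (Finset.subset_univ A)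
    intro S _ _
    have hfn : 0 ≤ f S := by rcases hfind S with h | h <;> rw [h] <;> norm_num
    have hgn : 0 ≤ g S := by rcases hgind S with h | h <;> rw [h] <;> norm_num
    exact mul_nonneg (hnn S) (mul_nonneg hfn hgn)
  -- E[f] = μ(NA) + E[fg]
  have hEf : (∑ S : Finset (Fin n), μ S * f S) =
      (∑ T ∈ NA, μ T) + ∑ S : Finset (Fin n), μ S * (f S * g S) := by
    have : (∑ T ∈ NA, μ T) = ∑ S : Finset (Fin n), μ S * f S * (1 - g S) := by
      rw [← Finset.sum_subset (Finset.subset_univ NA)]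
      · apply Finset.sum_congr rfl
        intro T hT
        obtain ⟨hT0, W, hW, hWT⟩ := (hNA' T).mp hT
        have haT : a ∉ T := ((hΩ₀ T).mp hT0).2
        have hfT : f T = 1 := by
          simp only [hf]; rw [if_pos ⟨W, hW, hWT⟩]
        simp [hfT, hg, haT]
      · intro S _ hS
        by_cases hm : 0 < μ S
        · by_cases haS : a ∈ S
          · simp [hg, haS]
          · have hS0 : S ∈ Ω₀ := (hΩ₀ S).mpr ⟨hm, haS⟩
            have : ¬ ∃ W ∈ A, W \ {a} ⊆ S := fun h => hS ((hNA' S).mpr ⟨hS0, h⟩)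
            simp only [hf, this, if_false, mul_zero, zero_mul]
        · simp [hzero S hm]
    rw [this, ← Finset.sum_add_distrib]
    apply Finset.sum_congr rfl
    intro S _
    ring
  -- μ(Ω₀) + μ(Ω₁) = 1
  have hpart : (∑ S ∈ Ω₀, μ S) + (∑ S ∈ Ω₁, μ S) = 1 := by
    have hdis : Disjoint Ω₀ Ω₁ := by
      rw [Finset.disjoint_left]
      intro S h0 h1
      exact ((hΩ₀ S).mp h0).2 ((hΩ₁ S).mp h1).2
    rw [← Finset.sum_union hdis, ← hsum]
    apply Finset.sum_subset (Finset.subset_univ _)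
    intro S _ hS
    rw [Finset.mem_union] at hS
    push_neg at hS
    by_cases hm : 0 < μ S
    · by_cases haS : a ∈ S
      · exact absurd ((hΩ₁ S).mpr ⟨hm, haS⟩) hS.2
      · exact absurd ((hΩ₀ S).mpr ⟨hm, haS⟩) hS.1
    · exact hzero S hm
  rw [hEf, hEg] at hkey
  rw [ge_iff_le, div_le_div_iff₀ hmarg hmarg']
  set Efg := ∑ S : Finset (Fin n), μ S * (f S * g S)
  have hsplit : Efg * (∑ S ∈ Ω₀, μ S) + Efg * (∑ S ∈ Ω₁, μ S) = Efg := by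
    rw [← mul_add, hpart, mul_one]
  nlinarith [hkey, hsplit, mul_le_mul_of_nonneg_right hEfg hmarg'.le]
end

section
/- Let G be a finite bipartite graph with parts X and Y, and let a : X → ℝ≥0, b : Y → ℝ≥0 satisfy Σ_{x∈X} a(x) = Σ_{y∈Y} b(y) = 1. Suppose the weighted Hall condition holds: for every A ⊆ X, Σ_{y∈N(A)} b(y) ≥ Σ_{x∈A} a(x), where N(A) is the set of neighbors of A. Then there exists w : X × Y → ℝ≥0 supported on edges of G such that Σ_y w(x,y) = a(x) for all x ∈ X and Σ_x w(x,y) = b(y) for all y ∈ Y. -/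
set_option linter.unusedSectionVars false
open Finset

namespace FracHall

variable {X Y : Type*} [Fintype X] [Fintype Y]

def Nb (E : X → Y → Prop) [∀ x y, Decidable (E x y)] (A : Finset X) : Finset Y :=
  univ.filter (fun y => ∃ x ∈ A, E x y)

variable {E : X → Y → Prop} [∀ x y, Decidable (E x y)]

lemma mem_Nb {A : Finset X} {y : Y} : y ∈ Nb E A ↔ ∃ x ∈ A, E x y := by
  simp [Nb]

lemma Nb_mono {A B : Finset X} (h : A ⊆ B) : Nb E A ⊆ Nb E B := by
  intro y hy; rw [mem_Nb] at *; obtain ⟨x, hx, hE⟩ := hy; exact ⟨x, h hx, hE⟩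

lemma Nb_union (A B : Finset X) [DecidableEq X] [DecidableEq Y] :
    Nb E (A ∪ B) = Nb E A ∪ Nb E B := by
  ext y
  simp only [mem_Nb, mem_union]
  constructor
  · rintro ⟨x, hx | hx, hE⟩
    · exact Or.inl ⟨x, hx, hE⟩
    · exact Or.inr ⟨x, hx, hE⟩
  · rintro (⟨x, hx, hE⟩ | ⟨x, hx, hE⟩)
    · exact ⟨x, Or.inl hx, hE⟩
    · exact ⟨x, Or.inr hx, hE⟩

lemma Nb_empty : Nb E (∅ : Finset X) = ∅ := by
  ext y; simp [mem_Nb]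

noncomputable def slack (E : X → Y → Prop) [∀ x y, Decidable (E x y)]
    (a : X → ℝ) (b : Y → ℝ) (A : Finset X) : ℝ :=
  ∑ y ∈ Nb E A, b y - ∑ x ∈ A, a x

lemma slack_submod (a : X → ℝ) (b : Y → ℝ) (hb : ∀ y, 0 ≤ b y) (A B : Finset X)
    [DecidableEq X] [DecidableEq Y] :
    slack E a b (A ∪ B) + slack E a b (A ∩ B) ≤ slack E a b A + slack E a b B := by
  have ha : ∑ x ∈ A ∪ B, a x + ∑ x ∈ A ∩ B, a x = ∑ x ∈ A, a x + ∑ x ∈ B, a x :=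
    Finset.sum_union_inter
  have hbu : ∑ y ∈ Nb E (A ∪ B), b y + ∑ y ∈ Nb E A ∩ Nb E B, b y
      = ∑ y ∈ Nb E A, b y + ∑ y ∈ Nb E B, b y := by
    rw [Nb_union]; exact Finset.sum_union_inter
  have hsub : ∑ y ∈ Nb E (A ∩ B), b y ≤ ∑ y ∈ Nb E A ∩ Nb E B, b y := by
    apply Finset.sum_le_sum_of_subset_of_nonneg
    · intro y hy; rw [mem_inter]; rw [mem_Nb] at hy; obtain ⟨x, hx, hE⟩ := hy
      rw [mem_inter] at hx
      exact ⟨mem_Nb.2 ⟨x, hx.1, hE⟩, mem_Nb.2 ⟨x, hx.2, hE⟩⟩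
    · intro y _ _; exact hb y
  simp only [slack]; linarith

lemma tight_union (a : X → ℝ) (b : Y → ℝ) (hb : ∀ y, 0 ≤ b y)
    (hall : ∀ A : Finset X, 0 ≤ slack E a b A) (A B : Finset X)
    [DecidableEq X] [DecidableEq Y]
    (hA : slack E a b A = 0) (hB : slack E a b B = 0) : slack E a b (A ∪ B) = 0 := by
  have h1 := slack_submod (E := E) a b hb A B
  have h2 := hall (A ∪ B)
  have h3 := hall (A ∩ B)
  linarith

open scoped Classical in
noncomputable def meas (E : X → Y → Prop) [∀ x y, Decidable (E x y)]
    (a : X → ℝ) (b : Y → ℝ) : ℕ :=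
  (univ.filter fun x => a x ≠ 0).card + (univ.filter fun y => b y ≠ 0).card +
    ((univ : Finset (Finset X)).filter fun A => slack E a b A ≠ 0).card

lemma aux (E : X → Y → Prop) [∀ x y, Decidable (E x y)] :
    ∀ n : ℕ, ∀ (a : X → ℝ) (b : Y → ℝ),
      meas E a b ≤ n →
      (∀ x, 0 ≤ a x) → (∀ y, 0 ≤ b y) → (∑ x, a x = ∑ y, b y) →
      (∀ A : Finset X, 0 ≤ slack E a b A) →
      ∃ w : X → Y → ℝ, (∀ x y, 0 ≤ w x y) ∧ (∀ x y, 0 < w x y → E x y) ∧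
        (∀ x, ∑ y, w x y = a x) ∧ (∀ y, ∑ x, w x y = b y) := by
  classical
  intro n
  induction n with
  | zero =>
    intro a b hm ha hb hsum _
    have ha0 : ∀ x, a x = 0 := by
      intro x
      by_contra hx
      have : x ∈ univ.filter fun x => a x ≠ 0 := by simp [hx]
      have := Finset.card_pos.2 ⟨x, this⟩
      simp only [meas] at hm; omega
    have hb0 : ∀ y, b y = 0 := by
      intro y
      by_contra hy
      have : y ∈ univ.filter fun y => b y ≠ 0 := by simp [hy]
      have := Finset.card_pos.2 ⟨y, this⟩
      simp only [meas] at hm; omega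
    exact ⟨0, by simp, by simp, by simp [ha0], by simp [hb0]⟩
  | succ n ih =>
    intro a b hm ha hb hsum hall
    by_cases hA : ∀ x, a x = 0
    · have hbsum : ∑ y, b y = 0 := by rw [← hsum]; simp [hA]
      have hb0 : ∀ y, b y = 0 := by
        intro y
        have := (Finset.sum_eq_zero_iff_of_nonneg (fun y _ => hb y)).1 hbsum
        exact this y (mem_univ y)
      exact ⟨0, by simp, by simp, by simp [hA], by simp [hb0]⟩
    push_neg at hA
    obtain ⟨x₀, hx₀⟩ := hA
    have hx₀pos : 0 < a x₀ := lt_of_le_of_ne (ha x₀) (Ne.symm hx₀)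
    -- find a good y₀
    have key : ∃ y₀, E x₀ y₀ ∧ 0 < b y₀ ∧
        ∀ A : Finset X, x₀ ∉ A → y₀ ∈ Nb E A → slack E a b A ≠ 0 := by
      by_contra hcon
      push_neg at hcon
      set T := (univ : Finset (Finset X)).filter (fun A => x₀ ∉ A ∧ slack E a b A = 0) with hT
      set A' := T.sup id with hA'
      have hx₀A' : x₀ ∉ A' := by
        intro hx
        rw [hA', Finset.mem_sup] at hx
        obtain ⟨A, hAT, hxA⟩ := hx
        exact ((mem_filter.1 hAT).2.1) hxA
      have htight : slack E a b A' = 0 := by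
        rw [hA']
        apply Finset.sup_induction (p := fun A => slack E a b A = 0)
        · show slack E a b ∅ = 0
          simp [slack, Nb_empty]
        · intro A hA2 B hB2
          exact tight_union a b hb hall A B hA2 hB2
        · intro A hAT
          exact (mem_filter.1 hAT).2.2
      -- every y with E x₀ y and b y ≠ 0 is in Nb A'
      have hsum2 : ∑ y ∈ Nb E A', b y = ∑ y ∈ Nb E (insert x₀ A'), b y := by
        apply Finset.sum_subset (Nb_mono (subset_insert _ _))
        intro y hy hyn
        rw [mem_Nb] at hy
        obtain ⟨x, hx, hE⟩ := hy
        rcases mem_insert.1 hx with rfl | hxA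
        · by_contra hby
          have hbpos : 0 < b y := lt_of_le_of_ne (hb y) (Ne.symm hby)
          obtain ⟨A, hxnA, hyN, hs0⟩ := hcon y hE hbpos
          have hAT : A ∈ T := by simp [hT, hxnA, hs0]
          exact hyn (Nb_mono (Finset.le_sup (f := id) hAT) hyN)
        · exact absurd (mem_Nb.2 ⟨x, hxA, hE⟩) hyn
      have := hall (insert x₀ A')
      rw [slack, ← hsum2, Finset.sum_insert hx₀A'] at this
      rw [slack] at htight
      linarith
    obtain ⟨y₀, hE0, hb0, hgood⟩ := key
    set bad := (univ : Finset (Finset X)).filter (fun A => x₀ ∉ A ∧ y₀ ∈ Nb E A) with hbad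
    set F := insert (a x₀) (insert (b y₀) (bad.image (slack E a b))) with hF
    have hFne : F.Nonempty := insert_nonempty _ _
    set ε := F.min' hFne with hεdef
    have hεpos : 0 < ε := by
      rw [hεdef, Finset.lt_min'_iff]
      intro t ht
      rw [hF, mem_insert, mem_insert] at ht
      rcases ht with rfl | rfl | ht
      · exact hx₀pos
      · exact hb0
      · rw [mem_image] at ht
        obtain ⟨A, hAbad, rfl⟩ := ht
        rw [hbad, mem_filter] at hAbad
        exact lt_of_le_of_ne (hall A) (Ne.symm (hgood A hAbad.2.1 hAbad.2.2))
    have hεa : ε ≤ a x₀ := Finset.min'_le _ _ (by rw [hF]; exact mem_insert_self _ _)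
    have hεb : ε ≤ b y₀ := Finset.min'_le _ _ (by rw [hF]; exact mem_insert_of_mem (mem_insert_self _ _))
    have hεbad : ∀ A : Finset X, x₀ ∉ A → y₀ ∈ Nb E A → ε ≤ slack E a b A := by
      intro A h1 h2
      apply Finset.min'_le
      rw [hF]
      refine mem_insert_of_mem (mem_insert_of_mem ?_)
      rw [mem_image]
      exact ⟨A, by simp [hbad, h1, h2], rfl⟩
    set a' := fun x => a x - if x = x₀ then ε else 0 with ha'
    set b' := fun y => b y - if y = y₀ then ε else 0 with hb'
    have ha'nn : ∀ x, 0 ≤ a' x := by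
      intro x; rw [ha']; dsimp only
      split
      · next h => subst h; linarith
      · simpa using ha x
    have hb'nn : ∀ y, 0 ≤ b' y := by
      intro y; rw [hb']; dsimp only
      split
      · next h => subst h; linarith
      · simpa using hb y
    have hsuma' : ∀ s : Finset X, ∑ x ∈ s, a' x = ∑ x ∈ s, a x - (if x₀ ∈ s then ε else 0) := by
      intro s
      rw [ha']
      rw [Finset.sum_sub_distrib, Finset.sum_ite_eq' s x₀ (fun _ => ε)]
    have hsumb' : ∀ s : Finset Y, ∑ y ∈ s, b' y = ∑ y ∈ s, b y - (if y₀ ∈ s then ε else 0) := by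
      intro s
      rw [hb']
      rw [Finset.sum_sub_distrib, Finset.sum_ite_eq' s y₀ (fun _ => ε)]
    have hslack' : ∀ A : Finset X, slack E a' b' A =
        slack E a b A - (if y₀ ∈ Nb E A then ε else 0) + (if x₀ ∈ A then ε else 0) := by
      intro A
      rw [slack, slack, hsuma', hsumb']
      ring
    have hsum' : ∑ x, a' x = ∑ y, b' y := by
      rw [hsuma', hsumb']
      simp [hsum]
    have hall' : ∀ A : Finset X, 0 ≤ slack E a' b' A := by
      intro A
      rw [hslack' A]
      by_cases hx : x₀ ∈ A
      · have hy : y₀ ∈ Nb E A := mem_Nb.2 ⟨x₀, hx, hE0⟩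
        rw [if_pos hy, if_pos hx]
        linarith [hall A]
      · by_cases hy : y₀ ∈ Nb E A
        · have := hεbad A hx hy
          rw [if_pos hy, if_neg hx]
          linarith
        · rw [if_neg hy, if_neg hx]
          linarith [hall A]
    -- measure decreases
    have hmeas : meas E a' b' ≤ n := by
      have hs1 : (univ.filter fun x => a' x ≠ 0) ⊆ (univ.filter fun x => a x ≠ 0) := by
        intro x hx
        rw [mem_filter] at *
        refine ⟨mem_univ x, ?_⟩
        rcases eq_or_ne x x₀ with rfl | hne
        · exact hx₀
        · rw [ha'] at hx; simpa [hne] using hx.2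
      have hs2 : (univ.filter fun y => b' y ≠ 0) ⊆ (univ.filter fun y => b y ≠ 0) := by
        intro y hy
        rw [mem_filter] at *
        refine ⟨mem_univ y, ?_⟩
        rcases eq_or_ne y y₀ with rfl | hne
        · exact ne_of_gt hb0
        · rw [hb'] at hy; simpa [hne] using hy.2
      have hs3 : ((univ : Finset (Finset X)).filter fun A => slack E a' b' A ≠ 0) ⊆
          ((univ : Finset (Finset X)).filter fun A => slack E a b A ≠ 0) := by
        intro A hA2
        rw [mem_filter] at *
        refine ⟨mem_univ A, ?_⟩
        intro h0
        apply hA2.2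
        rw [hslack' A, h0]
        by_cases hx : x₀ ∈ A
        · have hy : y₀ ∈ Nb E A := mem_Nb.2 ⟨x₀, hx, hE0⟩
          simp [hx, hy]
        · by_cases hy : y₀ ∈ Nb E A
          · exact absurd h0 (hgood A hx hy)
          · simp [hx, hy]
      -- strict decrease in one component
      have hmem := Finset.min'_mem F hFne
      rw [← hεdef, hF, mem_insert, mem_insert] at hmem
      have hstrict : meas E a' b' < meas E a b := by
        rcases hmem with hc | hc | hc
        · -- ε = a x₀ : x₀ leaves support of a
          have h1 : (univ.filter fun x => a' x ≠ 0) ⊂ (univ.filter fun x => a x ≠ 0) := by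
            refine Finset.ssubset_iff_of_subset hs1 |>.2 ⟨x₀, by simp [hx₀], ?_⟩
            simp [ha', ← hc]
          have := Finset.card_lt_card h1
          have c2 := Finset.card_le_card hs2
          have c3 := Finset.card_le_card hs3
          simp only [meas]; omega
        · have h1 : (univ.filter fun y => b' y ≠ 0) ⊂ (univ.filter fun y => b y ≠ 0) := by
            refine Finset.ssubset_iff_of_subset hs2 |>.2 ⟨y₀, by simp [ne_of_gt hb0], ?_⟩
            simp [hb', ← hc]
          have := Finset.card_lt_card h1
          have c1 := Finset.card_le_card hs1
          have c3 := Finset.card_le_card hs3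
          simp only [meas]; omega
        · rw [mem_image] at hc
          obtain ⟨A, hAbad, hAs⟩ := hc
          rw [hbad, mem_filter] at hAbad
          obtain ⟨-, hxA, hyA⟩ := hAbad
          have h1 : ((univ : Finset (Finset X)).filter fun A => slack E a' b' A ≠ 0) ⊂
              ((univ : Finset (Finset X)).filter fun A => slack E a b A ≠ 0) := by
            refine Finset.ssubset_iff_of_subset hs3 |>.2 ⟨A, ?_, ?_⟩
            · simp only [mem_filter, mem_univ, true_and]
              rw [hAs]; exact ne_of_gt hεpos
            · simp only [mem_filter, mem_univ, true_and, not_not]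
              rw [hslack' A, hAs]
              simp [hxA, hyA]
          have := Finset.card_lt_card h1
          have c1 := Finset.card_le_card hs1
          have c2 := Finset.card_le_card hs2
          simp only [meas]; omega
      omega
    obtain ⟨w', hw'nn, hw'E, hw'r, hw'c⟩ := ih a' b' hmeas ha'nn hb'nn hsum' hall'
    refine ⟨fun x y => w' x y + if x = x₀ ∧ y = y₀ then ε else 0, ?_, ?_, ?_, ?_⟩
    · intro x y
      have := hw'nn x y
      dsimp only
      split <;> linarith
    · intro x y hpos
      dsimp only at hpos
      by_cases h : x = x₀ ∧ y = y₀
      · rw [h.1, h.2]; exact hE0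
      · rw [if_neg h, add_zero] at hpos
        exact hw'E x y hpos
    · intro x
      dsimp only
      rw [Finset.sum_add_distrib, hw'r x]
      rcases eq_or_ne x x₀ with rfl | hne
      · simp only [true_and]
        rw [Finset.sum_ite_eq' univ y₀ (fun _ => ε)]
        simp [ha']
      · have : ∑ y, (if x = x₀ ∧ y = y₀ then ε else 0) = 0 := by
          apply Finset.sum_eq_zero; intro y _; simp [hne]
        rw [this]
        simp [ha', hne]
    · intro y
      dsimp only
      rw [Finset.sum_add_distrib, hw'c y]
      rcases eq_or_ne y y₀ with rfl | hne
      · simp only [and_true]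
        rw [Finset.sum_ite_eq' univ x₀ (fun _ => ε)]
        simp [hb']
      · have : ∑ x, (if x = x₀ ∧ y = y₀ then ε else 0) = 0 := by
          apply Finset.sum_eq_zero; intro x _; simp [hne]
        rw [this]
        simp [hb', hne]

end FracHall

/-- Weighted (fractional) Hall's theorem: if the weighted expansion condition holds,
then a fractional perfect matching between the weighted vertex sets exists. -/
theorem fractional_hall {X Y : Type*} [Fintype X] [Fintype Y]
    (E : X → Y → Prop) [∀ x y, Decidable (E x y)]
    (a : X → ℝ) (b : Y → ℝ)
    (ha : ∀ x, 0 ≤ a x) (hb : ∀ y, 0 ≤ b y)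
    (hasum : ∑ x, a x = 1) (hbsum : ∑ y, b y = 1)
    (hall : ∀ A : Finset X,
      ∑ y ∈ univ.filter (fun y => ∃ x ∈ A, E x y), b y ≥ ∑ x ∈ A, a x) :
    ∃ w : X → Y → ℝ, (∀ x y, 0 ≤ w x y) ∧ (∀ x y, 0 < w x y → E x y) ∧
      (∀ x, ∑ y, w x y = a x) ∧ (∀ y, ∑ x, w x y = b y) := by
  apply FracHall.aux E (FracHall.meas E a b) a b le_rfl ha hb (by rw [hasum, hbsum])
  intro A
  have := hall A
  rw [FracHall.slack, FracHall.Nb]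
  linarith
end

section
/- Let (Ω, P, π) be a finite reversible Markov chain with partition Ω = Ω₀ ⊔ Ω₁, and suppose that for distinct i,j ∈ {0,1} and every x ∈ Ω_i, Σ_{y∈Ω_j} P(x,y) = P̄(i,j) (the escape probability is uniform within each block). Let λ̄ be the Poincaré constant of the projection chain and λ₀, λ₁ the Poincaré constants of the restriction chains (Ω_i, P_i), where P_i(x,y) = P(x,y) for x ≠ y in Ω_i and P_i(x,x) = P(x,x) + Σ_{z∉Ω_i} P(x,z). Then the Poincaré constant of (Ω,P,π) is at least min{λ̄, λ₀, λ₁}. -/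
open Finset

noncomputable def dirichletForm {Ω : Type*} [Fintype Ω] (P : Ω → Ω → ℝ) (π : Ω → ℝ)
    (f : Ω → ℝ) : ℝ :=
  (1 / 2) * ∑ x, ∑ y, (f x - f y) ^ 2 * P x y * π x

noncomputable def piVar {Ω : Type*} [Fintype Ω] (π : Ω → ℝ) (f : Ω → ℝ) : ℝ :=
  ∑ x, (f x - ∑ y, π y * f y) ^ 2 * π x

noncomputable def poincare {Ω : Type*} [Fintype Ω] (P : Ω → Ω → ℝ) (π : Ω → ℝ) : ℝ :=
  sInf {r : ℝ | ∃ f : Ω → ℝ, piVar π f ≠ 0 ∧ r = dirichletForm P π f / piVar π f}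

noncomputable def projPi {Ω : Type*} [Fintype Ω] (π : Ω → ℝ) (b : Ω → Fin 2)
    (i : Fin 2) : ℝ :=
  ∑ x ∈ univ.filter (fun x => b x = i), π x

noncomputable def projP {Ω : Type*} [Fintype Ω] (P : Ω → Ω → ℝ) (π : Ω → ℝ)
    (b : Ω → Fin 2) (i j : Fin 2) : ℝ :=
  (projPi π b i)⁻¹ *
    ∑ x ∈ univ.filter (fun x => b x = i), ∑ y ∈ univ.filter (fun y => b y = j), π x * P x y

/-- Restriction chain kernel on the block `{x // b x = i}`: off-diagonal entries agree
with `P`; rejected moves out of the block stay put. -/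
noncomputable def restrictP {Ω : Type*} [Fintype Ω] [DecidableEq Ω]
    (P : Ω → Ω → ℝ) (b : Ω → Fin 2) (i : Fin 2)
    (x y : {z : Ω // b z = i}) : ℝ :=
  if x = y then 1 - ∑ z : {z : Ω // b z = i}, if z = x then 0 else P x.1 z.1
  else P x.1 y.1

/-- Stationary distribution of the restriction chain: `π` restricted and normalized. -/
noncomputable def restrictPi {Ω : Type*} [Fintype Ω] (π : Ω → ℝ) (b : Ω → Fin 2)
    (i : Fin 2) (x : {z : Ω // b z = i}) : ℝ :=
  π x.1 / projPi π b i

lemma cs_weighted {α : Type*} (s : Finset α) (w a : α → ℝ) (hw : ∀ x ∈ s, 0 ≤ w x) :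
    (∑ x ∈ s, a x * w x) ^ 2 ≤ (∑ x ∈ s, w x) * ∑ x ∈ s, a x ^ 2 * w x := by
  have h := Finset.sum_mul_sq_le_sq_mul_sq s (fun x => Real.sqrt (w x))
    (fun x => a x * Real.sqrt (w x))
  have e1 : ∑ x ∈ s, Real.sqrt (w x) * (a x * Real.sqrt (w x)) = ∑ x ∈ s, a x * w x :=
    Finset.sum_congr rfl fun x hx => by
      rw [show Real.sqrt (w x) * (a x * Real.sqrt (w x)) = a x * Real.sqrt (w x) ^ 2 by ring,
        Real.sq_sqrt (hw x hx)]
  have e2 : ∑ x ∈ s, Real.sqrt (w x) ^ 2 = ∑ x ∈ s, w x :=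
    Finset.sum_congr rfl fun x hx => Real.sq_sqrt (hw x hx)
  have e3 : ∑ x ∈ s, (a x * Real.sqrt (w x)) ^ 2 = ∑ x ∈ s, a x ^ 2 * w x :=
    Finset.sum_congr rfl fun x hx => by
      rw [mul_pow, Real.sq_sqrt (hw x hx)]
  rwa [e1, e2, e3] at h

section DecompAux

variable {Ω : Type*} [Fintype Ω] [DecidableEq Ω]

/-- The block of the partition. -/
def blk (b : Ω → Fin 2) (i : Fin 2) : Finset Ω := univ.filter (fun x => b x = i)

/-- The block average of `f`. -/
noncomputable def fbar (π : Ω → ℝ) (b : Ω → Fin 2) (f : Ω → ℝ) (i : Fin 2) : ℝ :=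
  (∑ x ∈ blk b i, π x * f x) / projPi π b i

variable (P : Ω → Ω → ℝ) (π : Ω → ℝ) (b : Ω → Fin 2)

lemma projPi_def (i : Fin 2) : projPi π b i = ∑ x ∈ blk b i, π x := rfl

lemma sum_blk_subtype (i : Fin 2) (g : Ω → ℝ) :
    ∑ x : {z : Ω // b z = i}, g x.1 = ∑ x ∈ blk b i, g x :=
  (Finset.sum_subtype _ (by simp [blk]) g).symm

lemma sum_fiber (g : Ω → ℝ) : ∑ i : Fin 2, ∑ x ∈ blk b i, g x = ∑ x, g x :=
  Finset.sum_fiberwise univ b g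

variable (hπpos : ∀ x, 0 < π x) (hne : ∀ i : Fin 2, ∃ x, b x = i)

include hπpos hne in
lemma projPi_pos (i : Fin 2) : 0 < projPi π b i := by
  obtain ⟨x, hx⟩ := hne i
  exact Finset.sum_pos (fun y _ => hπpos y) ⟨x, by simp [blk, hx]⟩

include hπpos hne in
lemma sum_blk_eq (f : Ω → ℝ) (i : Fin 2) :
    ∑ x ∈ blk b i, π x * f x = projPi π b i * fbar π b f i := by
  rw [fbar, mul_div_cancel₀ _ (projPi_pos π b hπpos hne i).ne']

include hπpos hne in
lemma restrict_mean (f : Ω → ℝ) (i : Fin 2) :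
    ∑ y : {z : Ω // b z = i}, restrictPi π b i y * f y.1 = fbar π b f i := by
  calc ∑ y : {z : Ω // b z = i}, restrictPi π b i y * f y.1
      = ∑ x ∈ blk b i, π x * f x / projPi π b i := by
        rw [← sum_blk_subtype b i (fun x => π x * f x / projPi π b i)]
        exact Finset.sum_congr rfl fun y _ => by rw [restrictPi]; ring
    _ = fbar π b f i := by rw [← Finset.sum_div, fbar]

include hπpos hne in
lemma block_var (f : Ω → ℝ) (i : Fin 2) :
    projPi π b i * piVar (restrictPi π b i) (fun x => f x.1)
      = ∑ x ∈ blk b i, (f x - fbar π b f i) ^ 2 * π x := by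
  have hP := (projPi_pos π b hπpos hne i).ne'
  rw [piVar]
  rw [restrict_mean π b hπpos hne f i]
  have : (∑ x : {z : Ω // b z = i}, (f x.1 - fbar π b f i) ^ 2 * restrictPi π b i x)
      = ∑ x ∈ blk b i, (f x - fbar π b f i) ^ 2 * (π x / projPi π b i) := by
    rw [← sum_blk_subtype b i (fun x => (f x - fbar π b f i) ^ 2 * (π x / projPi π b i))]
    exact Finset.sum_congr rfl fun x _ => rfl
  rw [this, Finset.mul_sum]
  exact Finset.sum_congr rfl fun x _ => by field_simp

include hπpos hne in
lemma var_decomp (f : Ω → ℝ) :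
    piVar π f = (∑ i : Fin 2, projPi π b i * piVar (restrictPi π b i)
        (fun x : {z : Ω // b z = i} => f x.1))
      + piVar (projPi π b) (fbar π b f) := by
  have hmean : ∑ j : Fin 2, projPi π b j * fbar π b f j = ∑ y, π y * f y := by
    rw [← sum_fiber b (fun y => π y * f y)]
    exact Finset.sum_congr rfl fun j _ => (sum_blk_eq π b hπpos hne f j).symm
  have hproj : piVar (projPi π b) (fbar π b f)
      = ∑ i : Fin 2, (fbar π b f i - ∑ y, π y * f y) ^ 2 * projPi π b i := by
    rw [piVar, hmean]
  have key : ∀ i : Fin 2, ∑ x ∈ blk b i, (f x - ∑ y, π y * f y) ^ 2 * π x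
      = (∑ x ∈ blk b i, (f x - fbar π b f i) ^ 2 * π x)
        + (fbar π b f i - ∑ y, π y * f y) ^ 2 * projPi π b i := by
    intro i
    have h1 := sum_blk_eq π b hπpos hne f i
    have expand : ∀ x, (f x - ∑ y, π y * f y) ^ 2 * π x
        = (f x - fbar π b f i) ^ 2 * π x
          + (2 * (fbar π b f i - ∑ y, π y * f y)) * (π x * f x)
          + ((fbar π b f i - ∑ y, π y * f y) ^ 2
              - 2 * (fbar π b f i - ∑ y, π y * f y) * fbar π b f i) * π x :=
      fun x => by ring
    calc ∑ x ∈ blk b i, (f x - ∑ y, π y * f y) ^ 2 * π x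
        = (∑ x ∈ blk b i, (f x - fbar π b f i) ^ 2 * π x)
          + (2 * (fbar π b f i - ∑ y, π y * f y)) * (∑ x ∈ blk b i, π x * f x)
          + ((fbar π b f i - ∑ y, π y * f y) ^ 2
              - 2 * (fbar π b f i - ∑ y, π y * f y) * fbar π b f i)
            * (∑ x ∈ blk b i, π x) := by
          rw [Finset.mul_sum, Finset.mul_sum, ← Finset.sum_add_distrib,
            ← Finset.sum_add_distrib]
          exact Finset.sum_congr rfl fun x _ => expand x
      _ = _ := by
          rw [h1, show (∑ x ∈ blk b i, π x) = projPi π b i from rfl]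
          generalize (∑ x ∈ blk b i, (f x - fbar π b f i) ^ 2 * π x) = T
          ring
  have htot : piVar π f = ∑ i : Fin 2, ∑ x ∈ blk b i, (f x - ∑ y, π y * f y) ^ 2 * π x := by
    rw [piVar, ← sum_fiber b]
  rw [htot, Finset.sum_congr rfl fun i _ => key i, Finset.sum_add_distrib, hproj]
  congr 1
  exact Finset.sum_congr rfl fun i _ => (block_var π b hπpos hne f i).symm

/-- Block-pair contribution to the Dirichlet form. -/
noncomputable def crossSum (P : Ω → Ω → ℝ) (π : Ω → ℝ) (b : Ω → Fin 2) (f : Ω → ℝ)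
    (i j : Fin 2) : ℝ :=
  ∑ x ∈ blk b i, ∑ y ∈ blk b j, (f x - f y) ^ 2 * P x y * π x

lemma dir_total (f : Ω → ℝ) :
    dirichletForm P π f = (1 / 2) * ∑ i : Fin 2, ∑ j : Fin 2, crossSum P π b f i j := by
  rw [dirichletForm]
  congr 1
  calc ∑ x, ∑ y, (f x - f y) ^ 2 * P x y * π x
      = ∑ i : Fin 2, ∑ x ∈ blk b i, ∑ y, (f x - f y) ^ 2 * P x y * π x :=
        (sum_fiber b (fun x => ∑ y, (f x - f y) ^ 2 * P x y * π x)).symm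
    _ = ∑ i : Fin 2, ∑ x ∈ blk b i, ∑ j : Fin 2, ∑ y ∈ blk b j,
          (f x - f y) ^ 2 * P x y * π x := by
        refine Finset.sum_congr rfl fun i _ => Finset.sum_congr rfl fun x _ => ?_
        exact (sum_fiber b (fun y => (f x - f y) ^ 2 * P x y * π x)).symm
    _ = ∑ i : Fin 2, ∑ j : Fin 2, crossSum P π b f i j :=
        Finset.sum_congr rfl fun i _ => Finset.sum_comm

include hπpos hne in
lemma dir_diag (f : Ω → ℝ) (i : Fin 2) :
    projPi π b i * dirichletForm (restrictP P b i) (restrictPi π b i)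
        (fun x : {z : Ω // b z = i} => f x.1)
      = (1 / 2) * crossSum P π b f i i := by
  have hP := (projPi_pos π b hπpos hne i).ne'
  calc projPi π b i * dirichletForm (restrictP P b i) (restrictPi π b i)
        (fun x : {z : Ω // b z = i} => f x.1)
      = (1 / 2) * ∑ x : {z : Ω // b z = i}, ∑ y : {z : Ω // b z = i},
          (f x.1 - f y.1) ^ 2 * P x.1 y.1 * π x.1 := by
        rw [dirichletForm, ← mul_assoc, mul_comm (projPi π b i) ((1 : ℝ) / 2), mul_assoc,
          Finset.mul_sum]
        congr 1
        refine Finset.sum_congr rfl fun x _ => ?_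
        rw [Finset.mul_sum]
        refine Finset.sum_congr rfl fun y _ => ?_
        by_cases hxy : x = y
        · subst hxy; simp
        · rw [restrictP, if_neg hxy, restrictPi]
          field_simp
    _ = (1 / 2) * ∑ x ∈ blk b i, ∑ y ∈ blk b i, (f x - f y) ^ 2 * P x y * π x := by
        congr 1
        rw [← sum_blk_subtype b i (fun x => ∑ y ∈ blk b i, (f x - f y) ^ 2 * P x y * π x)]
        exact Finset.sum_congr rfl fun x _ =>
          sum_blk_subtype b i (fun y => (f x.1 - f y) ^ 2 * P x.1 y * π x.1)
    _ = (1 / 2) * crossSum P π b f i i := rfl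

include hπpos hne in
lemma dir_cross (hPnn : ∀ x y, 0 ≤ P x y) (hrev : ∀ x y, π x * P x y = π y * P y x)
    (hunif : ∀ i j : Fin 2, i ≠ j → ∀ x : Ω, b x = i →
      ∑ y ∈ univ.filter (fun y => b y = j), P x y = projP P π b i j)
    (f : Ω → ℝ) (i j : Fin 2) (hij : i ≠ j) :
    (fbar π b f i - fbar π b f j) ^ 2 * projP P π b i j * projPi π b i
      ≤ crossSum P π b f i j := by
  have hpi := projPi_pos π b hπpos hne i
  have hpj := projPi_pos π b hπpos hne j
  have hc : projPi π b i * projP P π b i j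
      = ∑ x ∈ blk b i, ∑ y ∈ blk b j, π x * P x y := by
    rw [projP, ← mul_assoc, mul_inv_cancel₀ hpi.ne', one_mul]; rfl
  have hlin1 : ∑ x ∈ blk b i, ∑ y ∈ blk b j, f x * (π x * P x y)
      = (projPi π b i * projP P π b i j) * fbar π b f i := by
    calc ∑ x ∈ blk b i, ∑ y ∈ blk b j, f x * (π x * P x y)
        = ∑ x ∈ blk b i, (f x * π x) * ∑ y ∈ blk b j, P x y := by
          refine Finset.sum_congr rfl fun x _ => ?_
          rw [Finset.mul_sum]
          exact Finset.sum_congr rfl fun y _ => by ring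
      _ = ∑ x ∈ blk b i, (f x * π x) * projP P π b i j := by
          refine Finset.sum_congr rfl fun x hx => ?_
          have hbx : b x = i := (Finset.mem_filter.mp hx).2
          have : ∑ y ∈ blk b j, P x y = projP P π b i j := hunif i j hij x hbx
          rw [this]
      _ = (∑ x ∈ blk b i, π x * f x) * projP P π b i j := by
          rw [← Finset.sum_mul]
          congr 1
          exact Finset.sum_congr rfl fun x _ => by ring
      _ = (projPi π b i * projP P π b i j) * fbar π b f i := by
          rw [sum_blk_eq π b hπpos hne f i]; ring
  have hsym : projPi π b j * projP P π b j i = projPi π b i * projP P π b i j := by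
    have hcj : projPi π b j * projP P π b j i
        = ∑ y ∈ blk b j, ∑ x ∈ blk b i, π y * P y x := by
      rw [projP, ← mul_assoc, mul_inv_cancel₀ hpj.ne', one_mul]; rfl
    rw [hcj, hc]
    rw [Finset.sum_comm]
    exact Finset.sum_congr rfl fun x _ => Finset.sum_congr rfl fun y _ => (hrev x y).symm
  have hlin2 : ∑ x ∈ blk b i, ∑ y ∈ blk b j, f y * (π x * P x y)
      = (projPi π b i * projP P π b i j) * fbar π b f j := by
    calc ∑ x ∈ blk b i, ∑ y ∈ blk b j, f y * (π x * P x y)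
        = ∑ y ∈ blk b j, ∑ x ∈ blk b i, f y * (π y * P y x) := by
          rw [Finset.sum_comm]
          exact Finset.sum_congr rfl fun y _ => Finset.sum_congr rfl fun x _ => by
            rw [hrev x y]
      _ = ∑ y ∈ blk b j, (f y * π y) * ∑ x ∈ blk b i, P y x := by
          refine Finset.sum_congr rfl fun y _ => ?_
          rw [Finset.mul_sum]
          exact Finset.sum_congr rfl fun x _ => by ring
      _ = ∑ y ∈ blk b j, (f y * π y) * projP P π b j i := by
          refine Finset.sum_congr rfl fun y hy => ?_
          have hby : b y = j := (Finset.mem_filter.mp hy).2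
          have : ∑ x ∈ blk b i, P y x = projP P π b j i := hunif j i hij.symm y hby
          rw [this]
      _ = (∑ y ∈ blk b j, π y * f y) * projP P π b j i := by
          rw [← Finset.sum_mul]
          congr 1
          exact Finset.sum_congr rfl fun y _ => by ring
      _ = (projPi π b i * projP P π b i j) * fbar π b f j := by
          rw [sum_blk_eq π b hπpos hne f j, ← hsym]; ring
  -- Cauchy–Schwarz on the product set
  have hCS := cs_weighted (blk b i ×ˢ blk b j) (fun p => π p.1 * P p.1 p.2)
    (fun p => f p.1 - f p.2) (fun p _ => mul_nonneg (hπpos p.1).le (hPnn p.1 p.2))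
  simp only [Finset.sum_product] at hCS
  have e1 : ∑ x ∈ blk b i, ∑ y ∈ blk b j, (f x - f y) * (π x * P x y)
      = (projPi π b i * projP P π b i j) * (fbar π b f i - fbar π b f j) := by
    have h' : ∀ x ∈ blk b i, ∑ y ∈ blk b j, (f x - f y) * (π x * P x y)
        = (∑ y ∈ blk b j, f x * (π x * P x y)) - ∑ y ∈ blk b j, f y * (π x * P x y) := by
      intro x _
      rw [← Finset.sum_sub_distrib]
      exact Finset.sum_congr rfl fun y _ => by ring
    rw [Finset.sum_congr rfl h', Finset.sum_sub_distrib, hlin1, hlin2]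
    ring
  have e3 : crossSum P π b f i j
      = ∑ x ∈ blk b i, ∑ y ∈ blk b j, (f x - f y) ^ 2 * (π x * P x y) := by
    refine Finset.sum_congr rfl fun x _ => Finset.sum_congr rfl fun y _ => by ring
  rw [e1, ← hc, ← e3] at hCS
  have hT : 0 ≤ crossSum P π b f i j := by
    rw [e3]
    exact Finset.sum_nonneg fun x _ => Finset.sum_nonneg fun y _ =>
      mul_nonneg (sq_nonneg _) (mul_nonneg (hπpos x).le (hPnn x y))
  have hcnn : 0 ≤ projPi π b i * projP P π b i j := by
    rw [hc]
    exact Finset.sum_nonneg fun x _ => Finset.sum_nonneg fun y _ =>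
      mul_nonneg (hπpos x).le (hPnn x y)
  rcases hcnn.eq_or_lt with hc0 | hcpos
  · have : (fbar π b f i - fbar π b f j) ^ 2 * projP P π b i j * projPi π b i
        = (fbar π b f i - fbar π b f j) ^ 2 * (projPi π b i * projP P π b i j) := by ring
    rw [this, ← hc0, mul_zero]
    exact hT
  · nlinarith [hCS, hcpos, hT]

lemma dir_proj (f : Ω → ℝ) :
    dirichletForm (projP P π b) (projPi π b) (fbar π b f)
      = (1 / 2) * ((fbar π b f 0 - fbar π b f 1) ^ 2 * projP P π b 0 1 * projPi π b 0
        + (fbar π b f 1 - fbar π b f 0) ^ 2 * projP P π b 1 0 * projPi π b 1) := by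
  rw [dirichletForm, Fin.sum_univ_two, Fin.sum_univ_two, Fin.sum_univ_two]
  simp only [sub_self]
  ring

include hπpos hne in
lemma dir_decomp (hPnn : ∀ x y, 0 ≤ P x y) (hrev : ∀ x y, π x * P x y = π y * P y x)
    (hunif : ∀ i j : Fin 2, i ≠ j → ∀ x : Ω, b x = i →
      ∑ y ∈ univ.filter (fun y => b y = j), P x y = projP P π b i j)
    (f : Ω → ℝ) :
    (∑ i : Fin 2, projPi π b i * dirichletForm (restrictP P b i) (restrictPi π b i)
        (fun x : {z : Ω // b z = i} => f x.1))
      + dirichletForm (projP P π b) (projPi π b) (fbar π b f) ≤ dirichletForm P π f := by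
  have htot := dir_total P π b f
  simp only [Fin.sum_univ_two] at htot
  have d0 := dir_diag P π b hπpos hne f 0
  have d1 := dir_diag P π b hπpos hne f 1
  have c01 := dir_cross P π b hπpos hne hPnn hrev hunif f 0 1 (by decide)
  have c10 := dir_cross P π b hπpos hne hPnn hrev hunif f 1 0 (by decide)
  rw [Fin.sum_univ_two, dir_proj P π b f, htot]
  linarith [d0, d1, c01, c10]

end DecompAux

section PoincareAux

variable {α : Type*} [Fintype α]

lemma piVar_nonneg (ρ : α → ℝ) (hρ : ∀ x, 0 ≤ ρ x) (g : α → ℝ) : 0 ≤ piVar ρ g :=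
  Finset.sum_nonneg fun x _ => mul_nonneg (sq_nonneg _) (hρ x)

lemma dirichlet_nonneg (Q : α → α → ℝ) (ρ : α → ℝ) (hQ : ∀ x y, x ≠ y → 0 ≤ Q x y)
    (hρ : ∀ x, 0 ≤ ρ x) (g : α → ℝ) : 0 ≤ dirichletForm Q ρ g := by
  apply mul_nonneg (by norm_num)
  refine Finset.sum_nonneg fun x _ => Finset.sum_nonneg fun y _ => ?_
  by_cases h : x = y
  · subst h; simp
  · exact mul_nonneg (mul_nonneg (sq_nonneg _) (hQ x y h)) (hρ x)

lemma poincare_mul_le (Q : α → α → ℝ) (ρ : α → ℝ) (hQ : ∀ x y, x ≠ y → 0 ≤ Q x y)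
    (hρ : ∀ x, 0 ≤ ρ x) (g : α → ℝ) :
    poincare Q ρ * piVar ρ g ≤ dirichletForm Q ρ g := by
  rcases (piVar_nonneg ρ hρ g).eq_or_lt with h | h
  · rw [← h, mul_zero]
    exact dirichlet_nonneg Q ρ hQ hρ g
  · have hb : BddBelow {r : ℝ | ∃ f : α → ℝ, piVar ρ f ≠ 0 ∧
        r = dirichletForm Q ρ f / piVar ρ f} := by
      refine ⟨0, ?_⟩
      rintro r ⟨f, hf, rfl⟩
      exact div_nonneg (dirichlet_nonneg Q ρ hQ hρ f) (piVar_nonneg ρ hρ f)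
    have hmem : dirichletForm Q ρ g / piVar ρ g ∈ {r : ℝ | ∃ f : α → ℝ, piVar ρ f ≠ 0 ∧
        r = dirichletForm Q ρ f / piVar ρ f} := ⟨g, h.ne', rfl⟩
    have hle : poincare Q ρ ≤ dirichletForm Q ρ g / piVar ρ g := csInf_le hb hmem
    calc poincare Q ρ * piVar ρ g ≤ (dirichletForm Q ρ g / piVar ρ g) * piVar ρ g :=
          mul_le_mul_of_nonneg_right hle h.le
      _ = dirichletForm Q ρ g := div_mul_cancel₀ _ h.ne'

lemma piVar_ne_zero (ρ : α → ℝ) (hρ : ∀ x, 0 < ρ x) (g : α → ℝ) (x0 x1 : α)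
    (hg : g x0 ≠ g x1) : piVar ρ g ≠ 0 := by
  intro h
  have hz := (Finset.sum_eq_zero_iff_of_nonneg
    (fun x (_ : x ∈ univ) => mul_nonneg (sq_nonneg (g x - ∑ y, ρ y * g y)) (hρ x).le)).mp h
  have e : ∀ x : α, g x = ∑ y, ρ y * g y := by
    intro x
    have hx := hz x (Finset.mem_univ x)
    have h2 : (g x - ∑ y, ρ y * g y) ^ 2 = 0 := by
      rcases mul_eq_zero.mp hx with h' | h'
      · exact h'
      · exact absurd h' (hρ x).ne'
    have := pow_eq_zero_iff (n := 2) (by norm_num) |>.mp h2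
    linarith [sub_eq_zero.mp this]
  exact hg (by rw [e x0, e x1])

end PoincareAux

/-- Decomposition theorem (Jerrum–Son–Tetali–Vigoda): under the uniform escape
probability condition, the Poincaré constant of the full chain is at least the minimum
of those of the projection chain and the restriction chains. -/
theorem decomposition_poincare {Ω : Type*} [Fintype Ω] [DecidableEq Ω]
    (P : Ω → Ω → ℝ) (π : Ω → ℝ) (b : Ω → Fin 2)
    (hπpos : ∀ x, 0 < π x) (hπsum : ∑ x, π x = 1)
    (hPnn : ∀ x y, 0 ≤ P x y) (hProw : ∀ x, ∑ y, P x y = 1)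
    (hrev : ∀ x y, π x * P x y = π y * P y x)
    (hne : ∀ i : Fin 2, ∃ x, b x = i)
    (hunif : ∀ i j : Fin 2, i ≠ j → ∀ x : Ω, b x = i →
      ∑ y ∈ univ.filter (fun y => b y = j), P x y = projP P π b i j) :
    poincare P π ≥
      min (poincare (projP P π b) (projPi π b))
        (min (poincare (restrictP P b 0) (restrictPi π b 0))
          (poincare (restrictP P b 1) (restrictPi π b 1))) := by
  have hππ : ∀ i, 0 < projPi π b i := projPi_pos π b hπpos hne
  obtain ⟨x0, hx0⟩ := hne 0
  obtain ⟨x1, hx1⟩ := hne 1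
  have hne01 : (fun x => if b x = 0 then (1 : ℝ) else 0) x0
      ≠ (fun x => if b x = 0 then (1 : ℝ) else 0) x1 := by
    simp [hx0, hx1]
  have hnonempty : {r : ℝ | ∃ f : Ω → ℝ, piVar π f ≠ 0 ∧
      r = dirichletForm P π f / piVar π f}.Nonempty :=
    ⟨_, ⟨(fun x => if b x = 0 then (1 : ℝ) else 0),
      piVar_ne_zero π hπpos (fun x => if b x = 0 then (1 : ℝ) else 0) x0 x1 hne01, rfl⟩⟩
  rw [ge_iff_le]
  refine le_csInf hnonempty ?_
  rintro r ⟨f, hf, rfl⟩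
  have hVpos : 0 < piVar π f :=
    (piVar_nonneg π (fun x => (hπpos x).le) f).lt_of_ne (Ne.symm hf)
  rw [le_div_iff₀ hVpos]
  have hρ0 : ∀ x : {z : Ω // b z = 0}, 0 ≤ restrictPi π b 0 x :=
    fun x => div_nonneg (hπpos x.1).le (hππ 0).le
  have hρ1 : ∀ x : {z : Ω // b z = 1}, 0 ≤ restrictPi π b 1 x :=
    fun x => div_nonneg (hπpos x.1).le (hππ 1).le
  have hQ0 : ∀ x y : {z : Ω // b z = 0}, x ≠ y → 0 ≤ restrictP P b 0 x y := fun x y hxy => by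
    rw [restrictP, if_neg hxy]; exact hPnn _ _
  have hQ1 : ∀ x y : {z : Ω // b z = 1}, x ≠ y → 0 ≤ restrictP P b 1 x y := fun x y hxy => by
    rw [restrictP, if_neg hxy]; exact hPnn _ _
  have hρp : ∀ i, 0 ≤ projPi π b i := fun i => (hππ i).le
  have hQp : ∀ i j : Fin 2, i ≠ j → 0 ≤ projP P π b i j := fun i j _ =>
    mul_nonneg (inv_nonneg.mpr (hππ i).le)
      (Finset.sum_nonneg fun x _ => Finset.sum_nonneg fun y _ =>
        mul_nonneg (hπpos x).le (hPnn x y))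
  have hP0 := poincare_mul_le (restrictP P b 0) (restrictPi π b 0) hQ0 hρ0 (fun x => f x.1)
  have hP1 := poincare_mul_le (restrictP P b 1) (restrictPi π b 1) hQ1 hρ1 (fun x => f x.1)
  have hPb := poincare_mul_le (projP P π b) (projPi π b) hQp hρp (fbar π b f)
  have hvd := var_decomp π b hπpos hne f
  rw [Fin.sum_univ_two] at hvd
  have hdd := dir_decomp P π b hπpos hne hPnn hrev hunif f
  rw [Fin.sum_univ_two] at hdd
  set m := min (poincare (projP P π b) (projPi π b))
    (min (poincare (restrictP P b 0) (restrictPi π b 0))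
      (poincare (restrictP P b 1) (restrictPi π b 1))) with hm
  have hm0 : m ≤ poincare (restrictP P b 0) (restrictPi π b 0) :=
    le_trans (min_le_right _ _) (min_le_left _ _)
  have hm1 : m ≤ poincare (restrictP P b 1) (restrictPi π b 1) :=
    le_trans (min_le_right _ _) (min_le_right _ _)
  have hmb : m ≤ poincare (projP P π b) (projPi π b) := min_le_left _ _
  have hV0 : 0 ≤ piVar (restrictPi π b 0) (fun x : {z : Ω // b z = 0} => f x.1) :=
    piVar_nonneg _ hρ0 _
  have hV1 : 0 ≤ piVar (restrictPi π b 1) (fun x : {z : Ω // b z = 1} => f x.1) :=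
    piVar_nonneg _ hρ1 _
  have hVb : 0 ≤ piVar (projPi π b) (fbar π b f) := piVar_nonneg _ hρp _
  have t0 : m * piVar (restrictPi π b 0) (fun x : {z : Ω // b z = 0} => f x.1)
      ≤ dirichletForm (restrictP P b 0) (restrictPi π b 0) (fun x => f x.1) :=
    le_trans (mul_le_mul_of_nonneg_right hm0 hV0) hP0
  have t1 : m * piVar (restrictPi π b 1) (fun x : {z : Ω // b z = 1} => f x.1)
      ≤ dirichletForm (restrictP P b 1) (restrictPi π b 1) (fun x => f x.1) :=
    le_trans (mul_le_mul_of_nonneg_right hm1 hV1) hP1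
  have tb : m * piVar (projPi π b) (fbar π b f)
      ≤ dirichletForm (projP P π b) (projPi π b) (fbar π b f) :=
    le_trans (mul_le_mul_of_nonneg_right hmb hVb) hPb
  have s0 := mul_le_mul_of_nonneg_left t0 (hππ 0).le
  have s1 := mul_le_mul_of_nonneg_left t1 (hππ 1).le
  have hmv : m * piVar π f
      = projPi π b 0 * (m * piVar (restrictPi π b 0) (fun x : {z : Ω // b z = 0} => f x.1))
        + projPi π b 1 * (m * piVar (restrictPi π b 1) (fun x : {z : Ω // b z = 1} => f x.1))
        + m * piVar (projPi π b) (fbar π b f) := by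
    rw [hvd]; ring
  linarith [s0, s1, tb, hdd, hmv]
end

section
/- Let μ be a k-homogeneous negatively associated probability distribution on 2^[n] whose support is the set of bases of a matroid, let n be an element with 0 < P[n ∈ S] < 1, and let Ω₀, Ω₁ be the states of M_μ not containing / containing n. Then there exists w : Ω₀ × Ω₁ → ℝ≥0 with w(x,y) > 0 only if P_μ(x,y) > 0 (i.e., |x △ y| = 2), Σ_{y∈Ω₁} w(x,y) = μ(x)/μ(Ω₀) for all x ∈ Ω₀, and Σ_{x∈Ω₀} w(x,y) = μ(y)/μ(Ω₁) for all y ∈ Ω₁. -/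
/-!
Hall's condition is an instance of negative association. For `A ⊆ Ω₁`, the event "`S ⊇ y \ {a}`
for some `y ∈ A`" is increasing and ignores `a`, while "`a ∈ S`" is increasing and depends only on
`a`. By homogeneity a support set in the first event is in `A` if it contains `a`, and is an
exchange neighbour of `A` otherwise, so negative correlation of the two events gives
`μ(A) μ(Ω₀) ≤ μ(N(A)) μ(Ω₁)`.

The fractional Hall theorem is proved by augmentation. Given `x₀` of positive weight, the tight
sets avoiding `x₀` are closed under union (the slack is submodular), and Hall's condition for the
largest one with `x₀` added yields a neighbour `y₀` of `x₀` of positive weight outside its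
neighbourhood. Moving mass `ε` onto the edge `x₀y₀` keeps Hall's condition as long as `ε` is at
most the slack of every set avoiding `x₀` that sees `y₀`; taking `ε` maximal, a positive weight
or a positive slack drops to zero.
-/

open Finset

lemma filter_pos_subset_filter_pos {γ : Type*} {s : Finset γ} {f g : γ → ℝ}
    (h : ∀ c ∈ s, g c ≤ f c) : {c ∈ s | 0 < g c} ⊆ {c ∈ s | 0 < f c} := fun c hc => by
  simp only [mem_filter] at hc ⊢
  exact ⟨hc.1, hc.2.trans_le (h c hc.1)⟩

lemma card_filter_pos_lt {γ : Type*} {s : Finset γ} {f g : γ → ℝ} (h : ∀ c ∈ s, g c ≤ f c)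
    {c : γ} (hc : c ∈ s) (hfc : 0 < f c) (hgc : g c ≤ 0) :
    #{c ∈ s | 0 < g c} < #{c ∈ s | 0 < f c} := by
  refine card_lt_card ((ssubset_iff_of_subset (filter_pos_subset_filter_pos h)).2 ⟨c, ?_, ?_⟩)
  · exact mem_filter.2 ⟨hc, hfc⟩
  · simpa [hc] using hgc

lemma sub_single_le {γ : Type*} [DecidableEq γ] (f : γ → ℝ) {c₀ : γ} {ε : ℝ} (hε : 0 ≤ ε)
    (c : γ) : (f - Pi.single c₀ ε : γ → ℝ) c ≤ f c := by
  simp only [Pi.sub_apply, sub_le_self_iff, Pi.single_apply]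
  split_ifs <;> simp [hε]

lemma sub_single_nonneg {γ : Type*} [DecidableEq γ] {s : Finset γ} {f : γ → ℝ}
    (hf : ∀ c ∈ s, 0 ≤ f c) {c₀ : γ} {ε : ℝ} (hε : ε ≤ f c₀) :
    ∀ c ∈ s, 0 ≤ (f - Pi.single c₀ ε : γ → ℝ) c := by
  intro c hc
  rcases eq_or_ne c c₀ with rfl | hne
  · simp [hε]
  · simp [hne, hf c hc]

section FractionalHall

variable {α β : Type*} (R : α → β → Prop)

structure IsFractionalMatching (X : Finset α) (Y : Finset β) (p : α → ℝ) (q : β → ℝ)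
    (w : α → β → ℝ) : Prop where
  nonneg : ∀ x y, 0 ≤ w x y
  support : ∀ x y, 0 < w x y → x ∈ X ∧ y ∈ Y ∧ R x y
  sum_row : ∀ x ∈ X, ∑ y ∈ Y, w x y = p x
  sum_col : ∀ y ∈ Y, ∑ x ∈ X, w x y = q y

variable {R} {X : Finset α} {Y : Finset β} {p : α → ℝ} {q : β → ℝ}

lemma isFractionalMatching_zero (hq : ∀ y ∈ Y, 0 ≤ q y) (hp : ∀ x ∈ X, p x = 0)
    (htot : ∑ x ∈ X, p x = ∑ y ∈ Y, q y) : IsFractionalMatching R X Y p q 0 := by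
  rw [sum_eq_zero hp, eq_comm, sum_eq_zero_iff_of_nonneg hq] at htot
  exact ⟨fun _ _ => le_rfl, fun _ _ h => (lt_irrefl 0 h).elim, fun x hx => by simp [hp x hx],
    fun y hy => by simp [htot y hy]⟩

lemma IsFractionalMatching.add_single [DecidableEq α] [DecidableEq β] {w : α → β → ℝ}
    {x₀ : α} {y₀ : β} {ε : ℝ}
    (hw : IsFractionalMatching R X Y (p - Pi.single x₀ ε) (q - Pi.single y₀ ε) w)
    (hx₀ : x₀ ∈ X) (hy₀ : y₀ ∈ Y) (hR : R x₀ y₀) (hε : 0 ≤ ε) :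
    IsFractionalMatching R X Y p q (w + Pi.single x₀ (Pi.single y₀ ε : β → ℝ)) where
  nonneg x y := by
    simp only [Pi.add_apply, Pi.single_apply, ite_apply, Pi.zero_apply]
    split_ifs <;> linarith [hw.nonneg x y]
  support x y h := by
    simp only [Pi.add_apply, Pi.single_apply, ite_apply, Pi.zero_apply] at h
    split_ifs at h with hx hy
    · subst hx hy
      exact ⟨hx₀, hy₀, hR⟩
    all_goals exact hw.support x y (by simpa using h)
  sum_row x hx := by
    simp only [Pi.add_apply, sum_add_distrib, hw.sum_row x hx]
    rcases eq_or_ne x x₀ with rfl | hx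
    · simp [hy₀]
    · simp [hx]
  sum_col y hy := by
    simp only [Pi.add_apply, sum_add_distrib, hw.sum_col y hy, Pi.single_apply, ite_apply,
      Pi.zero_apply, sum_ite_eq', if_pos hx₀, Pi.sub_apply]
    ring

variable (R) [DecidableRel R]

def relNeighbors (Y : Finset β) (A : Finset α) : Finset β :=
  {y ∈ Y | ∃ x ∈ A, R x y}

def hallSlack (Y : Finset β) (p : α → ℝ) (q : β → ℝ) (A : Finset α) : ℝ :=
  ∑ y ∈ relNeighbors R Y A, q y - ∑ x ∈ A, p x

noncomputable def matchingPotential (X : Finset α) (Y : Finset β) (p : α → ℝ) (q : β → ℝ) : ℕ :=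
  #{x ∈ X | 0 < p x} + #{y ∈ Y | 0 < q y} + #{A ∈ X.powerset | 0 < hallSlack R Y p q A}

variable {R}

lemma mem_relNeighbors {A : Finset α} {y : β} :
    y ∈ relNeighbors R Y A ↔ y ∈ Y ∧ ∃ x ∈ A, R x y :=
  mem_filter

lemma relNeighbors_mono {A B : Finset α} (h : A ⊆ B) : relNeighbors R Y A ⊆ relNeighbors R Y B :=
  fun _ hy => by
    obtain ⟨hy, x, hx, hxy⟩ := mem_relNeighbors.1 hy
    exact mem_relNeighbors.2 ⟨hy, x, h hx, hxy⟩

lemma relNeighbors_union [DecidableEq α] [DecidableEq β] (A B : Finset α) :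
    relNeighbors R Y (A ∪ B) = relNeighbors R Y A ∪ relNeighbors R Y B := by
  ext y
  simp only [mem_union, mem_relNeighbors, or_and_right, exists_or, and_or_left]

lemma hallSlack_union_add_inter_le [DecidableEq α] [DecidableEq β] (hq : ∀ y ∈ Y, 0 ≤ q y)
    (A B : Finset α) :
    hallSlack R Y p q (A ∪ B) + hallSlack R Y p q (A ∩ B) ≤
      hallSlack R Y p q A + hallSlack R Y p q B := by
  have hinter : ∑ y ∈ relNeighbors R Y (A ∩ B), q y ≤
      ∑ y ∈ relNeighbors R Y A ∩ relNeighbors R Y B, q y :=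
    sum_le_sum_of_subset_of_nonneg
      (subset_inter (relNeighbors_mono inter_subset_left) (relNeighbors_mono inter_subset_right))
      fun y hy _ => hq y (mem_relNeighbors.1 (mem_inter.1 hy).1).1
  have hN := sum_union_inter (s₁ := relNeighbors R Y A) (s₂ := relNeighbors R Y B) (f := q)
  have hX := sum_union_inter (s₁ := A) (s₂ := B) (f := p)
  rw [← relNeighbors_union] at hN
  simp only [hallSlack]
  linarith

lemma exists_greatest_tight_not_mem [DecidableEq α] [DecidableEq β] (hq : ∀ y ∈ Y, 0 ≤ q y)
    (hall : ∀ A ⊆ X, 0 ≤ hallSlack R Y p q A) (x₀ : α) :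
    ∃ T ⊆ X, x₀ ∉ T ∧ hallSlack R Y p q T ≤ 0 ∧
      ∀ A ⊆ X, x₀ ∉ A → hallSlack R Y p q A ≤ 0 → A ⊆ T := by
  set tight := {A ∈ X.powerset | x₀ ∉ A ∧ hallSlack R Y p q A ≤ 0}
  have hT : tight.sup id ⊆ X ∧ x₀ ∉ tight.sup id ∧ hallSlack R Y p q (tight.sup id) ≤ 0 := by
    refine sup_induction (p := fun T => T ⊆ X ∧ x₀ ∉ T ∧ hallSlack R Y p q T ≤ 0) ?_ ?_ ?_
    · simp [hallSlack, relNeighbors]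
    · rintro A ⟨hAX, hxA, hA⟩ B ⟨hBX, hxB, hB⟩
      rw [sup_eq_union]
      refine ⟨union_subset hAX hBX, by simp [hxA, hxB], ?_⟩
      have := hall (A ∩ B) (inter_subset_left.trans hAX)
      linarith [hallSlack_union_add_inter_le (R := R) (p := p) hq A B]
    · intro A hA
      simpa [tight] using hA
  exact ⟨_, hT.1, hT.2.1, hT.2.2, fun A hAX hxA hA =>
    le_sup (f := id) (mem_filter.2 ⟨mem_powerset.2 hAX, hxA, hA⟩)⟩

lemma exists_augmenting_edge [DecidableEq α] [DecidableEq β] (hq : ∀ y ∈ Y, 0 ≤ q y)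
    (hall : ∀ A ⊆ X, 0 ≤ hallSlack R Y p q A) {x₀ : α} (hx₀ : x₀ ∈ X) (hpx₀ : 0 < p x₀) :
    ∃ y₀ ∈ Y, R x₀ y₀ ∧ 0 < q y₀ ∧
      ∀ A ⊆ X, x₀ ∉ A → y₀ ∈ relNeighbors R Y A → 0 < hallSlack R Y p q A := by
  obtain ⟨T, hTX, hx₀T, hT, hTmax⟩ := exists_greatest_tight_not_mem hq hall x₀
  have hgain : p x₀ ≤ ∑ y ∈ relNeighbors R Y (insert x₀ T) \ relNeighbors R Y T, q y := by
    have := hall _ (insert_subset hx₀ hTX)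
    rw [sum_sdiff_eq_sub (relNeighbors_mono (subset_insert _ _))]
    simp only [hallSlack, sum_insert hx₀T] at this hT
    linarith
  obtain ⟨y₀, hy₀, hqy₀⟩ := exists_lt_of_sum_lt (f := fun _ => (0 : ℝ)) (g := q)
    (by rw [sum_const_zero]; exact hpx₀.trans_le hgain)
  obtain ⟨hy₀N, hy₀T⟩ := mem_sdiff.1 hy₀
  obtain ⟨hy₀Y, x, hx, hxy₀⟩ := mem_relNeighbors.1 hy₀N
  obtain rfl | hxT := mem_insert.1 hx
  · refine ⟨y₀, hy₀Y, hxy₀, hqy₀, fun A hAX hxA hy₀A => ?_⟩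
    by_contra! hA
    exact hy₀T (relNeighbors_mono (hTmax A hAX hxA hA) hy₀A)
  · exact absurd (mem_relNeighbors.2 ⟨hy₀Y, x, hxT, hxy₀⟩) hy₀T

lemma hallSlack_sub_single [DecidableEq α] [DecidableEq β] (x₀ : α) (y₀ : β) (ε : ℝ)
    (A : Finset α) :
    hallSlack R Y (p - Pi.single x₀ ε) (q - Pi.single y₀ ε) A =
      hallSlack R Y p q A - (if y₀ ∈ relNeighbors R Y A then ε else 0) +
        (if x₀ ∈ A then ε else 0) := by
  simp only [hallSlack, Pi.sub_apply, sum_sub_distrib, sum_pi_single']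
  ring

lemma hall_sub_single [DecidableEq α] [DecidableEq β] (hall : ∀ A ⊆ X, 0 ≤ hallSlack R Y p q A)
    {x₀ : α} {y₀ : β} {ε : ℝ} (hy₀ : y₀ ∈ Y) (hR : R x₀ y₀)
    (hε : ∀ A ⊆ X, x₀ ∉ A → y₀ ∈ relNeighbors R Y A → ε ≤ hallSlack R Y p q A) :
    ∀ A ⊆ X, 0 ≤ hallSlack R Y (p - Pi.single x₀ ε) (q - Pi.single y₀ ε) A := by
  intro A hA
  rw [hallSlack_sub_single]
  by_cases hx : x₀ ∈ A
  · simpa [hx, mem_relNeighbors.2 ⟨hy₀, x₀, hx, hR⟩] using hall A hA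
  · by_cases hy : y₀ ∈ relNeighbors R Y A
    · simpa [hx, hy] using hε A hA hx hy
    · simpa [hx, hy] using hall A hA

lemma matchingPotential_sub_single_lt [DecidableEq α] [DecidableEq β] {x₀ : α} {y₀ : β} {ε : ℝ}
    (hx₀ : x₀ ∈ X) (hy₀ : y₀ ∈ Y) (hR : R x₀ y₀) (hε : 0 < ε)
    (htight : p x₀ = ε ∨ q y₀ = ε ∨
      ∃ A ⊆ X, x₀ ∉ A ∧ y₀ ∈ relNeighbors R Y A ∧ hallSlack R Y p q A = ε) :
    matchingPotential R X Y (p - Pi.single x₀ ε) (q - Pi.single y₀ ε) <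
      matchingPotential R X Y p q := by
  have hp := sub_single_le p (c₀ := x₀) hε.le
  have hq := sub_single_le q (c₀ := y₀) hε.le
  have hslack : ∀ A ∈ X.powerset,
      hallSlack R Y (p - Pi.single x₀ ε) (q - Pi.single y₀ ε) A ≤ hallSlack R Y p q A := by
    intro A _
    rw [hallSlack_sub_single]
    by_cases hx : x₀ ∈ A
    · simp [hx, mem_relNeighbors.2 ⟨hy₀, x₀, hx, hR⟩]
    · split_ifs <;> linarith
  have h₁ := card_le_card (filter_pos_subset_filter_pos (s := X) fun x _ => hp x)
  have h₂ := card_le_card (filter_pos_subset_filter_pos (s := Y) fun y _ => hq y)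
  have h₃ := card_le_card (filter_pos_subset_filter_pos hslack)
  unfold matchingPotential
  rcases htight with h | h | ⟨A, hAX, hxA, hyA, hA⟩
  · have := card_filter_pos_lt (fun x _ => hp x) hx₀ (h ▸ hε) (by simp [h])
    omega
  · have := card_filter_pos_lt (fun y _ => hq y) hy₀ (h ▸ hε) (by simp [h])
    omega
  · have := card_filter_pos_lt hslack (mem_powerset.2 hAX) (hA ▸ hε)
      (by simp [hallSlack_sub_single, hxA, hyA, hA])
    omega

lemma exists_augmentation [DecidableEq α] [DecidableEq β] (hq : ∀ y ∈ Y, 0 ≤ q y)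
    (hall : ∀ A ⊆ X, 0 ≤ hallSlack R Y p q A) {x₀ : α} (hx₀ : x₀ ∈ X) (hpx₀ : 0 < p x₀) :
    ∃ y₀ ∈ Y, R x₀ y₀ ∧ ∃ ε, 0 < ε ∧ ε ≤ p x₀ ∧ ε ≤ q y₀ ∧
      (∀ A ⊆ X, 0 ≤ hallSlack R Y (p - Pi.single x₀ ε) (q - Pi.single y₀ ε) A) ∧
      matchingPotential R X Y (p - Pi.single x₀ ε) (q - Pi.single y₀ ε) <
        matchingPotential R X Y p q := by
  obtain ⟨y₀, hy₀, hR, hqy₀, hslack⟩ := exists_augmenting_edge hq hall hx₀ hpx₀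
  set C := {A ∈ X.powerset | x₀ ∉ A ∧ y₀ ∈ relNeighbors R Y A}
  set bounds := insert (p x₀) (insert (q y₀) (C.image (hallSlack R Y p q)))
  set ε := bounds.min' (insert_nonempty _ _)
  have hle : ∀ b ∈ bounds, ε ≤ b := fun b hb => min'_le _ _ hb
  have hpos : 0 < ε := by
    refine (lt_min'_iff _ _).2 fun b hb => ?_
    simp only [bounds, C, mem_insert, mem_image, mem_filter, mem_powerset] at hb
    obtain rfl | rfl | ⟨A, ⟨hAX, hxA, hyA⟩, rfl⟩ := hb
    exacts [hpx₀, hqy₀, hslack A hAX hxA hyA]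
  have hmem := min'_mem bounds (insert_nonempty _ _)
  simp only [bounds, C, mem_insert, mem_image, mem_filter, mem_powerset] at hmem
  refine ⟨y₀, hy₀, hR, ε, hpos, hle _ (mem_insert_self _ _), hle _ (by simp [bounds]),
    hall_sub_single hall hy₀ hR fun A hAX hxA hyA => hle _ ?_,
    matchingPotential_sub_single_lt hx₀ hy₀ hR hpos ?_⟩
  · simp only [bounds, C, mem_insert, mem_image, mem_filter, mem_powerset]
    exact Or.inr (Or.inr ⟨A, ⟨hAX, hxA, hyA⟩, rfl⟩)
  · obtain h | h | ⟨A, ⟨hAX, hxA, hyA⟩, h⟩ := hmem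
    exacts [Or.inl h.symm, Or.inr (Or.inl h.symm), Or.inr (Or.inr ⟨A, hAX, hxA, hyA, h⟩)]

theorem exists_isFractionalMatching_of_hall [DecidableEq α] [DecidableEq β]
    (hp : ∀ x ∈ X, 0 ≤ p x) (hq : ∀ y ∈ Y, 0 ≤ q y) (hall : ∀ A ⊆ X, 0 ≤ hallSlack R Y p q A)
    (htot : ∑ x ∈ X, p x = ∑ y ∈ Y, q y) : ∃ w, IsFractionalMatching R X Y p q w := by
  induction hM : matchingPotential R X Y p q using Nat.strong_induction_on generalizing p q with
  | _ M ih =>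
  by_cases hpos : ∃ x₀ ∈ X, 0 < p x₀
  · obtain ⟨x₀, hx₀, hpx₀⟩ := hpos
    obtain ⟨y₀, hy₀, hR, ε, hε, hεp, hεq, hall', hlt⟩ := exists_augmentation hq hall hx₀ hpx₀
    obtain ⟨w, hw⟩ := ih _ (hM ▸ hlt) (sub_single_nonneg hp hεp) (sub_single_nonneg hq hεq) hall'
      (by simp [sum_sub_distrib, sum_pi_single', hx₀, hy₀, htot]) rfl
    exact ⟨_, hw.add_single hx₀ hy₀ hR hε.le⟩
  · simp only [not_exists, not_and, not_lt] at hpos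
    exact ⟨0, isFractionalMatching_zero hq (fun x hx => le_antisymm (hpos x hx) (hp x hx)) htot⟩

end FractionalHall

section NegativeAssociation

variable {n : ℕ}

lemma isIndicator_ite (P : Finset (Fin n) → Prop) [DecidablePred P] :
    IsIndicator fun S => if P S then (1 : ℝ) else 0 :=
  fun S => by dsimp only; split_ifs <;> simp

lemma isIncreasingFn_ite {P : Finset (Fin n) → Prop} [DecidablePred P] (hP : Monotone P) :
    IsIncreasingFn fun S => if P S then (1 : ℝ) else 0 := by
  intro S T hST
  by_cases hT : P T
  · simp only [hT, if_true]
    split_ifs <;> norm_num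
  · simp [hT, mt (hP hST) hT]

lemma dependsOnCoords_ite {P : Finset (Fin n) → Prop} [DecidablePred P] {D : Finset (Fin n)}
    (hP : ∀ S T, S ∩ D = T ∩ D → (P S ↔ P T)) :
    DependsOnCoords (fun S => if P S then (1 : ℝ) else 0) D :=
  fun S T h => if_congr (hP S T h) rfl rfl

lemma NegAssoc.sum_filter_and_le {μ : Finset (Fin n) → ℝ} (hNA : NegAssoc μ)
    {P Q : Finset (Fin n) → Prop} [DecidablePred P] [DecidablePred Q]
    (hP : Monotone P) (hQ : Monotone Q) {D E : Finset (Fin n)}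
    (hPD : ∀ S T, S ∩ D = T ∩ D → (P S ↔ P T)) (hQE : ∀ S T, S ∩ E = T ∩ E → (Q S ↔ Q T))
    (hDE : Disjoint D E) :
    ∑ S with P S ∧ Q S, μ S ≤ (∑ S with P S, μ S) * ∑ S with Q S, μ S := by
  have h := hNA _ _ D E (isIndicator_ite P) (isIndicator_ite Q) (isIncreasingFn_ite hP)
    (isIncreasingFn_ite hQ) (dependsOnCoords_ite hPD) (dependsOnCoords_ite hQE) hDE
  simp only [ite_zero_mul_ite_zero, mul_one] at h
  simp only [mul_ite, mul_one, mul_zero] at h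
  rwa [← sum_filter, ← sum_filter, ← sum_filter] at h

lemma sum_eq_sum_filter_of_mem_iff {ι : Type*} [Fintype ι] {μ : ι → ℝ} (hμ : ∀ S, 0 ≤ μ S)
    {P : ι → Prop} [DecidablePred P] {Ω : Finset ι} (hΩ : ∀ S, S ∈ Ω ↔ 0 < μ S ∧ P S) :
    ∑ S ∈ Ω, μ S = ∑ S with P S, μ S := by
  refine sum_subset (fun S hS => by simp [((hΩ S).1 hS).2]) fun S hS hSΩ => ?_
  have hP : P S := by simpa using hS
  exact le_antisymm (not_lt.1 fun h => hSΩ ((hΩ S).2 ⟨h, hP⟩)) (hμ S)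

end NegativeAssociation

section BasisExchange

variable {α : Type*} [DecidableEq α]

def IsExchange (S T : Finset α) : Prop :=
  #(S \ T) = 1 ∧ #(T \ S) = 1

instance : DecidableRel (IsExchange (α := α)) :=
  fun _ _ => instDecidableAnd

lemma Finset.eq_of_erase_subset_of_card_le {a : α} {S T : Finset α} (haS : a ∈ S) (haT : a ∈ T)
    (h : T.erase a ⊆ S) (hcard : #S ≤ #T) : T = S :=
  eq_of_subset_of_card_le (insert_erase haT ▸ insert_subset haS h) hcard

lemma isExchange_of_erase_subset {a : α} {S T : Finset α} (haS : a ∉ S) (haT : a ∈ T)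
    (h : T.erase a ⊆ S) (hcard : #S = #T) : IsExchange T S := by
  have hTS : T \ S = {a} := by
    ext i
    simp only [mem_sdiff, mem_singleton]
    refine ⟨fun ⟨hiT, hiS⟩ => by_contra fun hia => hiS (h (mem_erase.2 ⟨hia, hiT⟩)), ?_⟩
    rintro rfl
    exact ⟨haT, haS⟩
  rw [IsExchange, ← card_sdiff_comm hcard.symm, hTS, card_singleton, and_self]

variable {k : ℕ} {a : α} {Ω₀ Ω₁ A : Finset (Finset α)}

lemma filter_exists_erase_subset_eq (hΩ₁ : ∀ S ∈ Ω₁, a ∈ S ∧ #S = k) (hA : A ⊆ Ω₁) :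
    {S ∈ Ω₁ | ∃ y ∈ A, y.erase a ⊆ S} = A := by
  ext S
  refine ⟨fun hS => ?_, fun hS => mem_filter.2 ⟨hA hS, S, hS, erase_subset a S⟩⟩
  obtain ⟨hSΩ, y, hy, hyS⟩ := mem_filter.1 hS
  obtain ⟨haS, hS⟩ := hΩ₁ S hSΩ
  obtain ⟨hay, hy'⟩ := hΩ₁ y (hA hy)
  rwa [← eq_of_erase_subset_of_card_le haS hay hyS (by rw [hS, hy'])]

lemma filter_exists_erase_subset_subset_relNeighbors (hΩ₀ : ∀ S ∈ Ω₀, a ∉ S ∧ #S = k)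
    (hA : ∀ y ∈ A, a ∈ y ∧ #y = k) :
    {S ∈ Ω₀ | ∃ y ∈ A, y.erase a ⊆ S} ⊆ relNeighbors IsExchange Ω₀ A := by
  intro S hS
  obtain ⟨hSΩ, y, hy, hyS⟩ := mem_filter.1 hS
  obtain ⟨haS, hS⟩ := hΩ₀ S hSΩ
  obtain ⟨hay, hy'⟩ := hA y hy
  exact mem_relNeighbors.2 ⟨hSΩ, y, hy, isExchange_of_erase_subset haS hay hyS (by rw [hS, hy'])⟩

end BasisExchange

lemma NegAssoc.hall_isExchange {n k : ℕ} {μ : Finset (Fin n) → ℝ} (hNA : NegAssoc μ)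
    (hnn : ∀ S, 0 ≤ μ S) (hsum : ∑ S : Finset (Fin n), μ S = 1)
    (hhom : ∀ S, 0 < μ S → S.card = k) {a : Fin n} {Ω₀ Ω₁ : Finset (Finset (Fin n))}
    (hΩ₀ : ∀ S, S ∈ Ω₀ ↔ 0 < μ S ∧ a ∉ S) (hΩ₁ : ∀ S, S ∈ Ω₁ ↔ 0 < μ S ∧ a ∈ S)
    {A : Finset (Finset (Fin n))} (hA : A ⊆ Ω₁) :
    (∑ S ∈ A, μ S) * ∑ S ∈ Ω₀, μ S ≤
      (∑ S ∈ relNeighbors IsExchange Ω₀ A, μ S) * ∑ S ∈ Ω₁, μ S := by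
  set P : Finset (Fin n) → Prop := fun S => ∃ y ∈ A, y.erase a ⊆ S
  have hP : Monotone P := fun S T hST ⟨y, hy, h⟩ => ⟨y, hy, h.trans hST⟩
  have hPD : ∀ S T, S ∩ univ.erase a = T ∩ univ.erase a → (P S ↔ P T) := by
    have key : ∀ (y S : Finset (Fin n)), y.erase a ⊆ S ↔ y.erase a ⊆ S ∩ univ.erase a :=
      fun y S => by rw [subset_inter_iff, and_iff_left (erase_subset_erase a (subset_univ y))]
    intro S T h
    simp only [P, key _ S, key _ T, h]
  have hQE : ∀ S T : Finset (Fin n), S ∩ {a} = T ∩ {a} → (a ∈ S ↔ a ∈ T) := by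
    intro S T h
    exact Iff.of_eq (by simpa only [mem_inter, mem_singleton, and_true] using congrArg (a ∈ ·) h)
  have hNAPQ := hNA.sum_filter_and_le hP (fun _ _ h ha => h ha) hPD hQE (by simp)
  have hm₀ : ∑ S ∈ Ω₀, μ S = ∑ S with a ∉ S, μ S := sum_eq_sum_filter_of_mem_iff hnn hΩ₀
  have hm₁ : ∑ S ∈ Ω₁, μ S = ∑ S with a ∈ S, μ S := sum_eq_sum_filter_of_mem_iff hnn hΩ₁
  have htot : ∑ S ∈ Ω₀, μ S + ∑ S ∈ Ω₁, μ S = 1 := by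
    rw [hm₀, hm₁, add_comm, sum_filter_add_sum_filter_not, hsum]
  have hΩ₁k : ∀ S ∈ Ω₁, a ∈ S ∧ #S = k := fun S hS =>
    ⟨((hΩ₁ S).1 hS).2, hhom S ((hΩ₁ S).1 hS).1⟩
  have hΩ₀k : ∀ S ∈ Ω₀, a ∉ S ∧ #S = k := fun S hS =>
    ⟨((hΩ₀ S).1 hS).2, hhom S ((hΩ₀ S).1 hS).1⟩
  have hPQ : ∑ S with P S ∧ a ∈ S, μ S = ∑ S ∈ A, μ S := by
    rw [← sum_eq_sum_filter_of_mem_iff hnn (Ω := Ω₁.filter P)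
      fun S => by rw [mem_filter, hΩ₁]; tauto]
    rw [filter_exists_erase_subset_eq hΩ₁k hA]
  have hPnQ : ∑ S with P S ∧ a ∉ S, μ S ≤ ∑ S ∈ relNeighbors IsExchange Ω₀ A, μ S := by
    rw [← sum_eq_sum_filter_of_mem_iff hnn (Ω := Ω₀.filter P)
      fun S => by rw [mem_filter, hΩ₀]; tauto]
    exact sum_le_sum_of_subset_of_nonneg
      (filter_exists_erase_subset_subset_relNeighbors hΩ₀k fun y hy => hΩ₁k y (hA hy))
      fun S _ _ => hnn S
  have hPsplit : ∑ S with P S, μ S = ∑ S with P S ∧ a ∈ S, μ S + ∑ S with P S ∧ a ∉ S, μ S := by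
    rw [← filter_filter, ← filter_filter, sum_filter_add_sum_filter_not]
  rw [← hm₁, hPsplit, hPQ] at hNAPQ
  have hm₁nn : 0 ≤ ∑ S ∈ Ω₁, μ S := sum_nonneg fun S _ => hnn S
  linear_combination hNAPQ + mul_le_mul_of_nonneg_right hPnQ hm₁nn + (∑ S ∈ A, μ S) * htot

theorem fractional_matching_of_negAssoc_general {n k : ℕ} (μ : Finset (Fin n) → ℝ)
    (hnn : ∀ S, 0 ≤ μ S) (hsum : ∑ S : Finset (Fin n), μ S = 1)
    (hhom : ∀ S, 0 < μ S → S.card = k) (hNA : NegAssoc μ)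
    (a : Fin n)
    (Ω₀ Ω₁ : Finset (Finset (Fin n)))
    (hΩ₀ : ∀ S, S ∈ Ω₀ ↔ 0 < μ S ∧ a ∉ S)
    (hΩ₁ : ∀ S, S ∈ Ω₁ ↔ 0 < μ S ∧ a ∈ S)
    (hmarg₀ : 0 < ∑ S ∈ Ω₀, μ S) (hmarg₁ : 0 < ∑ S ∈ Ω₁, μ S) :
    ∃ w : Finset (Fin n) → Finset (Fin n) → ℝ,
      (∀ x y, 0 ≤ w x y) ∧
      (∀ x y, 0 < w x y →
        x ∈ Ω₀ ∧ y ∈ Ω₁ ∧ (x \ y).card = 1 ∧ (y \ x).card = 1) ∧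
      (∀ x ∈ Ω₀, ∑ y ∈ Ω₁, w x y = μ x / (∑ S ∈ Ω₀, μ S)) ∧
      (∀ y ∈ Ω₁, ∑ x ∈ Ω₀, w x y = μ y / (∑ S ∈ Ω₁, μ S)) := by
  obtain ⟨w, hw⟩ := exists_isFractionalMatching_of_hall (R := IsExchange) (X := Ω₁) (Y := Ω₀)
    (p := fun S => μ S / ∑ S ∈ Ω₁, μ S) (q := fun S => μ S / ∑ S ∈ Ω₀, μ S)
    (fun S _ => div_nonneg (hnn S) hmarg₁.le) (fun S _ => div_nonneg (hnn S) hmarg₀.le)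
    (fun A hA => by
      rw [hallSlack, ← sum_div, ← sum_div, sub_nonneg, div_le_div_iff₀ hmarg₁ hmarg₀]
      exact hNA.hall_isExchange hnn hsum hhom hΩ₀ hΩ₁ hA)
    (by rw [← sum_div, ← sum_div, div_self hmarg₁.ne', div_self hmarg₀.ne'])
  refine ⟨fun x y => w y x, fun x y => hw.nonneg y x, fun x y h => ?_, hw.sum_col, hw.sum_row⟩
  obtain ⟨hy, hx, hyx⟩ := hw.support y x h
  exact ⟨hx, hy, hyx.2, hyx.1⟩

/-- Fractional perfect matching between the two fibers of the basis-exchange chain. -/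
theorem fractional_matching_of_negAssoc {n k : ℕ} (μ : Finset (Fin n) → ℝ)
    (hnn : ∀ S, 0 ≤ μ S) (hsum : ∑ S : Finset (Fin n), μ S = 1)
    (hhom : ∀ S, 0 < μ S → S.card = k) (hNA : NegAssoc μ)
    (hexch : ∀ S T : Finset (Fin n), 0 < μ S → 0 < μ T → ∀ i ∈ S \ T,
      ∃ j ∈ T \ S, 0 < μ (insert j (S.erase i)))
    (a : Fin n)
    (Ω₀ Ω₁ : Finset (Finset (Fin n)))
    (hΩ₀ : ∀ S, S ∈ Ω₀ ↔ 0 < μ S ∧ a ∉ S)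
    (hΩ₁ : ∀ S, S ∈ Ω₁ ↔ 0 < μ S ∧ a ∈ S)
    (hmarg₀ : 0 < ∑ S ∈ Ω₀, μ S) (hmarg₁ : 0 < ∑ S ∈ Ω₁, μ S) :
    ∃ w : Finset (Fin n) → Finset (Fin n) → ℝ,
      (∀ x y, 0 ≤ w x y) ∧
      (∀ x y, 0 < w x y →
        x ∈ Ω₀ ∧ y ∈ Ω₁ ∧ (x \ y).card = 1 ∧ (y \ x).card = 1) ∧
      (∀ x ∈ Ω₀, ∑ y ∈ Ω₁, w x y = μ x / (∑ S ∈ Ω₀, μ S)) ∧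
      (∀ y ∈ Ω₁, ∑ x ∈ Ω₀, w x y = μ y / (∑ S ∈ Ω₁, μ S)) :=
  fractional_matching_of_negAssoc_general μ hnn hsum hhom hNA a Ω₀ Ω₁ hΩ₀ hΩ₁ hmarg₀ hmarg₁
end
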